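/- For the 2×2 operator matrix T = [[A, B], [C, D]] on H₁ ⊕ H₂, w(T) ≤ (1/2)[w(A) + w(D) + √((w(A) − w(D))² + ‖B‖² + ‖C‖² + 2w(CB))]. -/

import Mathlib

open ContinuousLinearMap

/-- Numerical radius of a bounded operator on a complex Hilbert space. -/
noncomputable def numRadius {H : Type*} [NormedAddCommGroup H] [InnerProductSpace ℂ H]
    (T : H →L[ℂ] H) : ℝ :=
  sSup {y : ℝ | ∃ x : H, ‖x‖ = 1 ∧ y = ‖(inner ℂ (T x) x : ℂ)‖}

lemma numRadius_nonneg {H : Type*} [NormedAddCommGroup H] [InnerProductSpace ℂ H]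
    (T : H →L[ℂ] H) : 0 ≤ numRadius T :=
  Real.sSup_nonneg (by rintro y ⟨x, hx, rfl⟩; positivity)

lemma numRadius_bddAbove {H : Type*} [NormedAddCommGroup H] [InnerProductSpace ℂ H]
    (T : H →L[ℂ] H) :
    BddAbove {y : ℝ | ∃ x : H, ‖x‖ = 1 ∧ y = ‖(inner ℂ (T x) x : ℂ)‖} := by
  refine ⟨‖T‖, ?_⟩
  rintro y ⟨x, hx, rfl⟩
  calc ‖(inner ℂ (T x) x : ℂ)‖ = ‖(inner ℂ (T x) x : ℂ)‖ := rfl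
    _ ≤ ‖T x‖ * ‖x‖ := norm_inner_le_norm _ _
    _ ≤ ‖T‖ * ‖x‖ * ‖x‖ := by gcongr; exact T.le_opNorm x
    _ = ‖T‖ := by rw [hx]; ring

lemma abs_inner_le_numRadius {H : Type*} [NormedAddCommGroup H] [InnerProductSpace ℂ H]
    (T : H →L[ℂ] H) (x : H) :
    ‖(inner ℂ (T x) x : ℂ)‖ ≤ numRadius T * ‖x‖ ^ 2 := by
  rcases eq_or_ne x 0 with rfl | hx
  · simp
  · have hnx : (0:ℝ) < ‖x‖ := norm_pos_iff.mpr hx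
    have hnxc : (‖x‖ : ℂ) ≠ 0 := by exact_mod_cast hnx.ne'
    set u : H := ((‖x‖ : ℂ))⁻¹ • x with hu
    have hun : ‖u‖ = 1 := by
      rw [hu, norm_smul, norm_inv]
      simp [hnx.ne']
    have hmem : ‖(inner ℂ (T u) u : ℂ)‖ ≤ numRadius T :=
      le_csSup (numRadius_bddAbove T) ⟨u, hun, rfl⟩
    have hxu : x = (‖x‖ : ℂ) • u := by
      rw [hu, smul_smul, mul_inv_cancel₀ hnxc, one_smul]
    have key : (inner ℂ (T x) x : ℂ) = (‖x‖ : ℂ) ^ 2 * inner ℂ (T u) u := by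
      conv_lhs => rw [hxu]
      rw [map_smul, inner_smul_left, inner_smul_right, Complex.conj_ofReal]
      ring
    rw [key, norm_mul]
    have h2 : ‖((‖x‖ : ℂ) ^ 2)‖ = ‖x‖ ^ 2 := by
      rw [norm_pow, Complex.norm_real, Real.norm_eq_abs, abs_of_nonneg hnx.le]
    rw [h2]
    calc ‖x‖ ^ 2 * ‖(inner ℂ (T u) u : ℂ)‖ ≤ ‖x‖ ^ 2 * numRadius T := by gcongr
      _ = numRadius T * ‖x‖ ^ 2 := by ring

lemma exists_unit_mul (c : ℂ) : ∃ μ : ℂ, ‖μ‖ = 1 ∧ μ * c = ‖c‖ := by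
  rcases eq_or_ne c 0 with h | h
  · exact ⟨1, by simp [h]⟩
  · refine ⟨(starRingEnd ℂ) c / ‖c‖, ?_, ?_⟩
    · simp [norm_div, h]
    · rw [div_mul_eq_mul_div, ← Complex.normSq_eq_conj_mul_self, Complex.normSq_eq_norm_sq,
        sq]
      push_cast
      rw [mul_div_assoc, div_self (by exact_mod_cast norm_ne_zero_iff.mpr h), mul_one]

lemma cauchy2 (α β u v : ℝ) (h : u ^ 2 + v ^ 2 = 1) :
    (α * u + β * v) ^ 2 ≤ α ^ 2 + β ^ 2 := by
  nlinarith [sq_nonneg (α * v - β * u)]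

lemma alg_lemma (a d K p q : ℝ) (hK : 0 ≤ K) (h1 : p ^ 2 + q ^ 2 = 1) :
    a * p ^ 2 + d * q ^ 2 + K * (p * q) ≤
      (1 / 2) * (a + d + Real.sqrt ((a - d) ^ 2 + K ^ 2)) := by
  set R := Real.sqrt ((a - d) ^ 2 + K ^ 2) with hR
  have hRnn : 0 ≤ R := Real.sqrt_nonneg _
  have hR2 : R ^ 2 = (a - d) ^ 2 + K ^ 2 := Real.sq_sqrt (by positivity)
  set X := (a - d) * (p ^ 2 - q ^ 2) + K * (2 * p * q) with hX
  have e : (p ^ 2 - q ^ 2) ^ 2 + (2 * p * q) ^ 2 = 1 := by nlinarith [h1]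
  have key : X ^ 2 ≤ R ^ 2 := by
    rw [hX, hR2]
    have := cauchy2 (a - d) K (p ^ 2 - q ^ 2) (2 * p * q) e
    linarith
  have key2 : X ≤ R := by
    calc X ≤ |X| := le_abs_self X
      _ = Real.sqrt (X ^ 2) := (Real.sqrt_sq_eq_abs X).symm
      _ ≤ Real.sqrt (R ^ 2) := Real.sqrt_le_sqrt key
      _ = R := Real.sqrt_sq hRnn
  have expand : a * p ^ 2 + d * q ^ 2 + K * (p * q)
      = (a + d) / 2 * (p ^ 2 + q ^ 2) + X / 2 := by rw [hX]; ring
  rw [expand, h1]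
  linarith

theorem numRadius_block_le
    {H₁ H₂ : Type*} [NormedAddCommGroup H₁] [InnerProductSpace ℂ H₁] [CompleteSpace H₁]
    [NormedAddCommGroup H₂] [InnerProductSpace ℂ H₂] [CompleteSpace H₂]
    (A : H₁ →L[ℂ] H₁) (B : H₂ →L[ℂ] H₁) (C : H₁ →L[ℂ] H₂) (D : H₂ →L[ℂ] H₂)
    (T : WithLp 2 (H₁ × H₂) →L[ℂ] WithLp 2 (H₁ × H₂))
    (hT : ∀ (x : H₁) (y : H₂),
      T ((WithLp.equiv 2 (H₁ × H₂)).symm (x, y)) =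
        (WithLp.equiv 2 (H₁ × H₂)).symm (A x + B y, C x + D y)) :
    numRadius T ≤ (1 / 2) * (numRadius A + numRadius D +
      Real.sqrt ((numRadius A - numRadius D) ^ 2 + ‖B‖ ^ 2 + ‖C‖ ^ 2
        + 2 * numRadius (C ∘L B))) := by
  set a := numRadius A with ha
  set d := numRadius D with hd
  have hCB := numRadius_nonneg (C ∘L B)
  set K : ℝ := Real.sqrt (‖B‖ ^ 2 + ‖C‖ ^ 2 + 2 * numRadius (C ∘L B)) with hKdef
  have hKnn : 0 ≤ K := Real.sqrt_nonneg _
  have hK2 : K ^ 2 = ‖B‖ ^ 2 + ‖C‖ ^ 2 + 2 * numRadius (C ∘L B) :=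
    Real.sq_sqrt (by positivity)
  have hrhs : (numRadius A - numRadius D) ^ 2 + ‖B‖ ^ 2 + ‖C‖ ^ 2
      + 2 * numRadius (C ∘L B) = (a - d) ^ 2 + K ^ 2 := by rw [hK2, ha, hd]; ring
  rw [hrhs]
  have hRHS0 : 0 ≤ (1 / 2) * (a + d + Real.sqrt ((a - d) ^ 2 + K ^ 2)) := by
    have h1 := numRadius_nonneg A; have h2 := numRadius_nonneg D
    have h3 := Real.sqrt_nonneg ((a - d) ^ 2 + K ^ 2)
    rw [ha] at *; rw [hd] at *
    linarith
  apply Real.sSup_le _ hRHS0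
  rintro r ⟨z, hz, rfl⟩
  set x : H₁ := (WithLp.equiv 2 (H₁ × H₂) z).1 with hx
  set y : H₂ := (WithLp.equiv 2 (H₁ × H₂) z).2 with hy
  have hz2 : (WithLp.equiv 2 (H₁ × H₂)).symm (x, y) = z := by
    rw [hx, hy]; exact (WithLp.equiv 2 (H₁ × H₂)).symm_apply_apply z
  have hTz : T z = (WithLp.equiv 2 (H₁ × H₂)).symm (A x + B y, C x + D y) := by
    rw [← hz2]; exact hT x y
  have hnorm : ‖x‖ ^ 2 + ‖y‖ ^ 2 = 1 := by
    have h := WithLp.prod_norm_sq_eq_of_L2 z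
    rw [hz, one_pow] at h
    exact h.symm
  have hinner : (inner ℂ (T z) z : ℂ) =
      inner ℂ (A x) x + inner ℂ (B y) x + (inner ℂ (C x) y + inner ℂ (D y) y) := by
    rw [hTz, ← hz2, WithLp.prod_inner_apply]
    change inner ℂ (A x + B y) x + inner ℂ (C x + D y) y = _
    rw [inner_add_left, inner_add_left]
  obtain ⟨μ, hμ, hμc⟩ := exists_unit_mul (inner ℂ (T z) z : ℂ)
  have hμa : ‖μ‖ = 1 := by exact hμ
  have habs : (‖(inner ℂ (T z) z : ℂ)‖ : ℝ) = (μ * (inner ℂ (T z) z : ℂ)).re := by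
    rw [hμc]; simp
  set w : H₁ := (starRingEnd ℂ μ) • (B y) + μ • ((adjoint C) y) with hw
  have hcross : (μ * (inner ℂ (B y) x : ℂ)).re + (μ * (inner ℂ (C x) y : ℂ)).re
      = (inner ℂ w x : ℂ).re := by
    rw [hw, inner_add_left, inner_smul_left, inner_smul_left, Complex.add_re]
    congr 1
    · rw [Complex.conj_conj]
    · rw [adjoint_inner_left]
      have h5 : μ * (inner ℂ (C x) y : ℂ)
          = (starRingEnd ℂ) ((starRingEnd ℂ) μ * (inner ℂ y (C x) : ℂ)) := by
        rw [map_mul, Complex.conj_conj, inner_conj_symm]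
      rw [h5, Complex.conj_re]
  have hadj : ‖(adjoint C) y‖ ≤ ‖C‖ * ‖y‖ := by
    calc ‖(adjoint C) y‖ ≤ ‖adjoint C‖ * ‖y‖ := (adjoint C).le_opNorm y
      _ = ‖C‖ * ‖y‖ := by rw [LinearIsometryEquiv.norm_map]
  have hwle : ‖w‖ ≤ K * ‖y‖ := by
    have h4 : (inner ℂ (B y) ((adjoint C) y) : ℂ) = inner ℂ ((C ∘L B) y) y := by
      rw [← inner_conj_symm, adjoint_inner_left, inner_conj_symm]
      rfl
    have h3 : (inner ℂ ((starRingEnd ℂ μ) • (B y)) (μ • ((adjoint C) y)) : ℂ)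
        = μ ^ 2 * inner ℂ ((C ∘L B) y) y := by
      rw [inner_smul_left, inner_smul_right, Complex.conj_conj, h4]
      ring
    have hw2 : ‖w‖ ^ 2 = ‖B y‖ ^ 2
        + 2 * (μ ^ 2 * (inner ℂ ((C ∘L B) y) y : ℂ)).re + ‖(adjoint C) y‖ ^ 2 := by
      have expand := norm_add_sq (𝕜 := ℂ) ((starRingEnd ℂ μ) • (B y)) (μ • ((adjoint C) y))
      rw [hw, expand, h3]
      have h1 : ‖(starRingEnd ℂ μ) • (B y)‖ = ‖B y‖ := by
        rw [norm_smul]; simp [hμ]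
      have h2 : ‖μ • ((adjoint C) y)‖ = ‖(adjoint C) y‖ := by
        rw [norm_smul, hμ, one_mul]
      rw [h1, h2]
      simp [RCLike.re_to_complex]
    have hre : (μ ^ 2 * (inner ℂ ((C ∘L B) y) y : ℂ)).re ≤ numRadius (C ∘L B) * ‖y‖ ^ 2 := by
      calc (μ ^ 2 * (inner ℂ ((C ∘L B) y) y : ℂ)).re
          ≤ ‖(μ ^ 2 * (inner ℂ ((C ∘L B) y) y : ℂ))‖ := Complex.re_le_norm _
        _ = ‖(inner ℂ ((C ∘L B) y) y : ℂ)‖ := by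
            rw [norm_mul, norm_pow, hμa]; ring
        _ ≤ numRadius (C ∘L B) * ‖y‖ ^ 2 := abs_inner_le_numRadius _ _
    have hBy : ‖B y‖ ≤ ‖B‖ * ‖y‖ := B.le_opNorm y
    have hB2 : ‖B y‖ ^ 2 ≤ ‖B‖ ^ 2 * ‖y‖ ^ 2 := by
      rw [← mul_pow]; exact pow_le_pow_left₀ (norm_nonneg _) hBy 2
    have hC2 : ‖(adjoint C) y‖ ^ 2 ≤ ‖C‖ ^ 2 * ‖y‖ ^ 2 := by
      rw [← mul_pow]; exact pow_le_pow_left₀ (norm_nonneg _) hadj 2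
    have hsq : ‖w‖ ^ 2 ≤ (K * ‖y‖) ^ 2 := by
      have h6 : (K * ‖y‖) ^ 2 = ‖B‖ ^ 2 * ‖y‖ ^ 2 + ‖C‖ ^ 2 * ‖y‖ ^ 2
          + 2 * (numRadius (C ∘L B) * ‖y‖ ^ 2) := by
        rw [mul_pow, hK2]; ring
      rw [hw2, h6]
      linarith [hre, hB2, hC2]
    calc ‖w‖ = Real.sqrt (‖w‖ ^ 2) := (Real.sqrt_sq (norm_nonneg w)).symm
      _ ≤ Real.sqrt ((K * ‖y‖) ^ 2) := Real.sqrt_le_sqrt hsq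
      _ = K * ‖y‖ := Real.sqrt_sq (by positivity)
  have hA : (μ * (inner ℂ (A x) x : ℂ)).re ≤ a * ‖x‖ ^ 2 := by
    calc (μ * (inner ℂ (A x) x : ℂ)).re ≤ ‖(μ * (inner ℂ (A x) x : ℂ))‖ :=
          Complex.re_le_norm _
      _ = ‖(inner ℂ (A x) x : ℂ)‖ := by rw [norm_mul, hμa, one_mul]
      _ ≤ a * ‖x‖ ^ 2 := abs_inner_le_numRadius _ _
  have hD : (μ * (inner ℂ (D y) y : ℂ)).re ≤ d * ‖y‖ ^ 2 := by
    calc (μ * (inner ℂ (D y) y : ℂ)).re ≤ ‖(μ * (inner ℂ (D y) y : ℂ))‖ :=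
          Complex.re_le_norm _
      _ = ‖(inner ℂ (D y) y : ℂ)‖ := by rw [norm_mul, hμa, one_mul]
      _ ≤ d * ‖y‖ ^ 2 := abs_inner_le_numRadius _ _
  have hwx : (inner ℂ w x : ℂ).re ≤ K * (‖x‖ * ‖y‖) := by
    calc (inner ℂ w x : ℂ).re ≤ ‖(inner ℂ w x : ℂ)‖ := Complex.re_le_norm _
      _ = ‖(inner ℂ w x : ℂ)‖ := rfl
      _ ≤ ‖w‖ * ‖x‖ := norm_inner_le_norm _ _
      _ ≤ (K * ‖y‖) * ‖x‖ := by gcongr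
      _ = K * (‖x‖ * ‖y‖) := by ring
  have main : ‖(inner ℂ (T z) z : ℂ)‖ ≤ a * ‖x‖ ^ 2 + d * ‖y‖ ^ 2 + K * (‖x‖ * ‖y‖) := by
    rw [habs, hinner]
    rw [mul_add, mul_add, mul_add, Complex.add_re, Complex.add_re, Complex.add_re]
    have := hcross
    linarith [hA, hD, hwx, hcross.le, hcross.ge]
  calc ‖(inner ℂ (T z) z : ℂ)‖
      ≤ a * ‖x‖ ^ 2 + d * ‖y‖ ^ 2 + K * (‖x‖ * ‖y‖) := main
    _ ≤ (1 / 2) * (a + d + Real.sqrt ((a - d) ^ 2 + K ^ 2)) := alg_lemma a d K ‖x‖ ‖y‖ hKnn hnorm
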